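/- With the same setup (v₁,v₂ isotropic, ⟨v₁,v₂⟩ = 1/2, u unit orthogonal to both; x = v₁ - v₂ + r·u, y = α v₁ - α⁻¹ v₂ + i s·u with α > 0, α ≠ 1, r,s ∈ (-1,1) nonzero; q = x - (⟨x,y⟩/|⟨x,y⟩|)·y), one has Im(⟨q,v₁⟩⟨v₂,q⟩ / ⟨v₁,v₂⟩) = r s (α² − 1) / √((α²+1)² + 4α²r²s²), which is nonzero. Consequently q does not lie on the bisector {z : Im(⟨z,v₁⟩⟨v₂,z⟩/⟨v₁,v₂⟩) = 0} determined by v₁ and v₂. -/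

import Mathlib

/-!
In the frame `v₁, v₂, u` the form reads `⟨z, z'⟩ = (a b̄' + b ā')/2 + c c̄'`, so
`q = (1 - κα) v₁ + (κ/α - 1) v₂ + (r - iκs) u` with `κ = ⟨x,y⟩/|⟨x,y⟩|`, and the bisector function
of `q` is `(κ/α - 1)(1 - κ̄α)/2 = (κ/α + κ̄α - 1 - |κ|²)/2`. Its imaginary part is
`Im κ · (α⁻¹ - α)/2`, and `⟨x,y⟩ = -(α + α⁻¹)/2 - i r s` gives `Im κ = -r s · 2α / √((α²+1)² + 4α²r²s²)`.
-/

/-- The Hermitian form of signature `(-,+,+)` on `ℂ³`. -/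
noncomputable def herm (x y : Fin 3 → ℂ) : ℂ :=
  -(x 0 * star (y 0)) + x 1 * star (y 1) + x 2 * star (y 2)

theorem herm_conj_symm (a b : Fin 3 → ℂ) : star (herm b a) = herm a b := by
  simp only [herm, star_add, star_neg, star_mul', star_star]
  ring

theorem herm_add_left (a b c : Fin 3 → ℂ) : herm (a + b) c = herm a c + herm b c := by
  simp only [herm, Pi.add_apply]
  ring

theorem herm_smul_left (t : ℂ) (a c : Fin 3 → ℂ) : herm (t • a) c = t * herm a c := by
  simp only [herm, Pi.smul_apply, smul_eq_mul]
  ring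

theorem herm_add_right (a b c : Fin 3 → ℂ) : herm a (b + c) = herm a b + herm a c := by
  simp only [herm, Pi.add_apply, star_add]
  ring

theorem herm_smul_right (t : ℂ) (a c : Fin 3 → ℂ) : herm a (t • c) = star t * herm a c := by
  simp only [herm, Pi.smul_apply, smul_eq_mul, star_mul']
  ring

theorem im_neg_one_add_mul_star (κ : ℂ) (α : ℝ) :
    ((-1 + κ * (α : ℂ)⁻¹) * star (1 - κ * α)).im = κ.im * (α⁻¹ - α) := by
  simp only [star_sub, star_one, star_mul', RCLike.star_def, Complex.conj_ofReal, Complex.mul_im,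
    Complex.add_re, Complex.neg_re, Complex.one_re, Complex.mul_re, Complex.inv_re, Complex.ofReal_re,
    Complex.normSq_ofReal, div_self_mul_self', Complex.inv_im, Complex.ofReal_im, neg_zero, zero_div, mul_zero,
    sub_zero, Complex.sub_im, Complex.one_im, Complex.conj_re, Complex.conj_im, neg_mul, zero_add, sub_neg_eq_add,
    Complex.add_im, Complex.neg_im, Complex.sub_re]
  ring

section Frame

variable {v₁ v₂ u : Fin 3 → ℂ}
  (h11 : herm v₁ v₁ = 0) (h22 : herm v₂ v₂ = 0) (h12 : herm v₁ v₂ = 1 / 2)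
  (huu : herm u u = 1) (hu1 : herm u v₁ = 0) (hu2 : herm u v₂ = 0)
include h11 h22 h12 huu hu1 hu2

theorem herm_frame (a b c a' b' c' : ℂ) :
    herm (a • v₁ + b • v₂ + c • u) (a' • v₁ + b' • v₂ + c' • u) =
      (a * star b' + b * star a') / 2 + c * star c' := by
  have h21 : herm v₂ v₁ = 1 / 2 := by rw [← herm_conj_symm, h12]; simp
  have h1u : herm v₁ u = 0 := by rw [← herm_conj_symm, hu1, star_zero]
  have h2u : herm v₂ u = 0 := by rw [← herm_conj_symm, hu2, star_zero]
  simp only [herm_add_left, herm_add_right, herm_smul_left, herm_smul_right,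
    h11, h22, h12, h21, huu, hu1, hu2, h1u, h2u]
  ring

theorem herm_frame_left (a b c : ℂ) : herm (a • v₁ + b • v₂ + c • u) v₁ = b / 2 := by
  simpa using herm_frame h11 h22 h12 huu hu1 hu2 a b c 1 0 0

theorem herm_frame_right (a b c : ℂ) : herm v₂ (a • v₁ + b • v₂ + c • u) = star a / 2 := by
  simpa using herm_frame h11 h22 h12 huu hu1 hu2 0 1 0 a b c

theorem im_bisector_sub_smul {x y : Fin 3 → ℂ} {α : ℝ} {c c' : ℂ} (hx : x = v₁ - v₂ + c • u)
    (hy : y = (α : ℂ) • v₁ - (α : ℂ)⁻¹ • v₂ + c' • u) (κ : ℂ) :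
    (herm (x - κ • y) v₁ * herm v₂ (x - κ • y) / herm v₁ v₂).im = κ.im * (α⁻¹ - α) / 2 := by
  have hq : x - κ • y = (1 - κ * α) • v₁ + (-1 + κ * (α : ℂ)⁻¹) • v₂ + (c - κ * c') • u := by
    rw [hx, hy]; module
  rw [hq, herm_frame_left h11 h22 h12 huu hu1 hu2, herm_frame_right h11 h22 h12 huu hu1 hu2, h12,
    ← im_neg_one_add_mul_star]
  rw [show (-1 + κ * (α : ℂ)⁻¹) / 2 * (star (1 - κ * α) / 2) / (1 / 2) =
    (-1 + κ * (α : ℂ)⁻¹) * star (1 - κ * α) / 2 by ring, Complex.div_ofNat_im]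

theorem herm_frame_x_y {x y : Fin 3 → ℂ} {α r s : ℝ} (hx : x = v₁ - v₂ + (r : ℂ) • u)
    (hy : y = (α : ℂ) • v₁ - (α : ℂ)⁻¹ • v₂ + (Complex.I * s) • u) :
    herm x y = -((α + α⁻¹) / 2 : ℝ) - (r * s : ℝ) * Complex.I := by
  rw [hx, hy, show v₁ - v₂ + (r : ℂ) • u = (1 : ℂ) • v₁ + (-1 : ℂ) • v₂ + (r : ℂ) • u by module,
    show (α : ℂ) • v₁ - (α : ℂ)⁻¹ • v₂ + (Complex.I * s) • u =
      (α : ℂ) • v₁ + (-(α : ℂ)⁻¹) • v₂ + (Complex.I * s) • u by module,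
    herm_frame h11 h22 h12 huu hu1 hu2]
  simp only [star_neg, star_inv₀, star_mul', Complex.star_def, Complex.conj_ofReal, Complex.conj_I]
  push_cast
  ring

theorem im_herm_frame_x_y {x y : Fin 3 → ℂ} {α r s : ℝ} (hx : x = v₁ - v₂ + (r : ℂ) • u)
    (hy : y = (α : ℂ) • v₁ - (α : ℂ)⁻¹ • v₂ + (Complex.I * s) • u) :
    (herm x y).im = -(r * s) := by
  simp [herm_frame_x_y h11 h22 h12 huu hu1 hu2 hx hy]

theorem norm_herm_frame_x_y {x y : Fin 3 → ℂ} {α r s : ℝ} (hα : 0 < α)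
    (hx : x = v₁ - v₂ + (r : ℂ) • u)
    (hy : y = (α : ℂ) • v₁ - (α : ℂ)⁻¹ • v₂ + (Complex.I * s) • u) :
    ‖herm x y‖ = √((α ^ 2 + 1) ^ 2 + 4 * α ^ 2 * r ^ 2 * s ^ 2) / (2 * α) := by
  have hre : (herm x y).re = -((α + α⁻¹) / 2) := by
    simp [herm_frame_x_y h11 h22 h12 huu hu1 hu2 hx hy]
  rw [Complex.norm_eq_sqrt_sq_add_sq, hre, im_herm_frame_x_y h11 h22 h12 huu hu1 hu2 hx hy,
    eq_div_iff (by positivity), ← Real.sqrt_sq (by positivity : 0 ≤ 2 * α),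
    ← Real.sqrt_mul (by positivity)]
  congr 1
  field_simp
  ring

end Frame

theorem stmt_3_general (v₁ v₂ u : Fin 3 → ℂ)
    (h11 : herm v₁ v₁ = 0) (h22 : herm v₂ v₂ = 0) (h12 : herm v₁ v₂ = 1 / 2)
    (huu : herm u u = 1) (hu1 : herm u v₁ = 0) (hu2 : herm u v₂ = 0)
    (α r s : ℝ) (hα : 0 < α) (hα1 : α ≠ 1)
    (hr : r ≠ 0)
    (hs : s ≠ 0)
    (x y q : Fin 3 → ℂ)
    (hx : x = v₁ - v₂ + (r : ℂ) • u)
    (hy : y = (α : ℂ) • v₁ - ((α : ℂ))⁻¹ • v₂ + (Complex.I * (s : ℂ)) • u)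
    (hq : q = x - (herm x y / (‖herm x y‖ : ℂ)) • y) :
    (herm q v₁ * herm v₂ q / herm v₁ v₂).im =
        r * s * (α ^ 2 - 1) / Real.sqrt ((α ^ 2 + 1) ^ 2 + 4 * α ^ 2 * r ^ 2 * s ^ 2) ∧
      (herm q v₁ * herm v₂ q / herm v₁ v₂).im ≠ 0 := by
  have hformula : (herm q v₁ * herm v₂ q / herm v₁ v₂).im =
      r * s * (α ^ 2 - 1) / Real.sqrt ((α ^ 2 + 1) ^ 2 + 4 * α ^ 2 * r ^ 2 * s ^ 2) := by
    rw [hq, im_bisector_sub_smul h11 h22 h12 huu hu1 hu2 hx hy, Complex.div_ofReal_im,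
      im_herm_frame_x_y h11 h22 h12 huu hu1 hu2 hx hy,
      norm_herm_frame_x_y h11 h22 h12 huu hu1 hu2 hα hx hy]
    field_simp
    ring
  refine ⟨hformula, hformula ▸ div_ne_zero ?_ (Real.sqrt_pos.mpr (by positivity)).ne'⟩
  have hα2 : α ^ 2 ≠ 1 := fun h => hα1 ((pow_eq_one_iff_of_nonneg hα.le two_ne_zero).mp h)
  exact mul_ne_zero (mul_ne_zero hr hs) (sub_ne_zero.mpr hα2)

theorem stmt_3 (v₁ v₂ u : Fin 3 → ℂ)
    (h11 : herm v₁ v₁ = 0) (h22 : herm v₂ v₂ = 0) (h12 : herm v₁ v₂ = 1 / 2)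
    (huu : herm u u = 1) (hu1 : herm u v₁ = 0) (hu2 : herm u v₂ = 0)
    (α r s : ℝ) (hα : 0 < α) (hα1 : α ≠ 1)
    (hr : r ≠ 0) (hr1 : -1 < r) (hr2 : r < 1)
    (hs : s ≠ 0) (hs1 : -1 < s) (hs2 : s < 1)
    (x y q : Fin 3 → ℂ)
    (hx : x = v₁ - v₂ + (r : ℂ) • u)
    (hy : y = (α : ℂ) • v₁ - ((α : ℂ))⁻¹ • v₂ + (Complex.I * (s : ℂ)) • u)
    (hq : q = x - (herm x y / (‖herm x y‖ : ℂ)) • y) :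
    (herm q v₁ * herm v₂ q / herm v₁ v₂).im =
        r * s * (α ^ 2 - 1) / Real.sqrt ((α ^ 2 + 1) ^ 2 + 4 * α ^ 2 * r ^ 2 * s ^ 2) ∧
      (herm q v₁ * herm v₂ q / herm v₁ v₂).im ≠ 0 :=
  stmt_3_general v₁ v₂ u h11 h22 h12 huu hu1 hu2 α r s hα hα1 hr hs x y q hx hy hq
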